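/- Let M = {f ∈ B : lim_{n→∞} ‖T_{t(n)} f − f‖ = 0} where t(n) → ∞. Then each T_t (t ≥ 0) restricts to an isometry of M: for all f ∈ M and t ≥ 0, ‖T_t f‖ = ‖f‖. -/
import Mathlib

open Filter Topology

/-- on `M = {f : ‖T_{t(n)} f - f‖ → 0}` each `T_t` is an isometry. -/
theorem isometry_on_M
    {B : Type*} [NormedAddCommGroup B] [NormedSpace ℂ B] [CompleteSpace B]
    (T : ℝ → B →L[ℂ] B)
    (hT0 : T 0 = 1)
    (hsem : ∀ s t : ℝ, 0 ≤ s → 0 ≤ t → T (s + t) = (T s).comp (T t))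
    (hcontr : ∀ t : ℝ, 0 ≤ t → ∀ g : B, ‖T t g‖ ≤ ‖g‖)
    (t : ℕ → ℝ) (ht : Tendsto t atTop atTop)
    (M : Set B)
    (hM : M = {f : B | Tendsto (fun n => ‖T (t n) f - f‖) atTop (𝓝 0)}) :
    ∀ f ∈ M, ∀ s : ℝ, 0 ≤ s → ‖T s f‖ = ‖f‖ := by
  intro f hf s hs
  rw [hM] at hf
  have hconv : Tendsto (fun n => T (t n) f) atTop (𝓝 f) :=
    tendsto_iff_norm_sub_tendsto_zero.mpr hf
  have hnorm : Tendsto (fun n => ‖T (t n) f‖) atTop (𝓝 ‖f‖) := hconv.norm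
  have hle : ‖f‖ ≤ ‖T s f‖ := by
    refine le_of_tendsto hnorm ?_
    filter_upwards [ht.eventually_ge_atTop s] with n hn
    have heq : T (t n) f = T (t n - s) (T s f) := by
      have := hsem (t n - s) s (by linarith) hs
      rw [sub_add_cancel] at this
      rw [this]; rfl
    rw [heq]
    exact hcontr _ (by linarith) _
  exact le_antisymm (hcontr s hs f) hle
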